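/- arXiv:1804.03055 — 2 statements merged into one kernel-verified Lean document; each statement's English description precedes it below -/
import Mathlib

section
/- The parallel postulate fails in the upper half-plane: for every h-line L and every point p ∈ U with p ∉ L, there are infinitely many h-lines that contain p and are disjoint from L. -/
/-- An h-line in the upper half-plane: either a vertical half-line
`{z : Im z > 0, Re z = a}` or a semicircle `{z : Im z > 0, |z − c| = r}`
with real center `c` and radius `r > 0`. -/
def IsHLine (L : Set ℂ) : Prop :=
  (∃ a : ℝ, L = {z : ℂ | 0 < z.im ∧ z.re = a}) ∨
  (∃ c r : ℝ, 0 < r ∧ L = {z : ℂ | 0 < z.im ∧ ‖z - c‖ = r})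

/-!
Every point `p` of the upper half-plane lies on exactly one semicircular h-line centred at each
real `c`, namely the one of radius `‖p - c‖`, and distinct centres give distinct h-lines. It
therefore suffices to exhibit infinitely many centres whose semicircle through `p` misses `L`.
If `L` is the vertical line `Re z = a`, any centre `c` far enough from `a` on the side of `p`
works, since then `‖p - c‖ < |a - c|`. If `L` is a semicircle of centre `c₀` and radius `r₀`,
every centre `c` with `2 |c - c₀| < |‖p - c₀‖ - r₀|` works: moving the centre by `|c - c₀|`
changes distances by at most that much, so the new semicircle stays away from `L`.
-/

open Complex Set

namespace HLine

def hSemicircle (c r : ℝ) : Set ℂ :=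
  {z : ℂ | 0 < z.im ∧ ‖z - c‖ = r}

theorem isHLine_hSemicircle {c r : ℝ} (hr : 0 < r) : IsHLine (hSemicircle c r) :=
  Or.inr ⟨c, r, hr, rfl⟩

theorem norm_sub_ofReal_sq (z : ℂ) (c : ℝ) : ‖z - c‖ ^ 2 = (z.re - c) ^ 2 + z.im ^ 2 := by
  rw [Complex.sq_norm, normSq_apply]
  simp only [sub_re, sub_im, ofReal_re, ofReal_im, sub_zero]
  ring

theorem norm_sub_ofReal_pos {z : ℂ} (hz : 0 < z.im) (c : ℝ) : 0 < ‖z - c‖ :=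
  norm_pos_iff.2 fun h => hz.ne' (by simpa using congrArg im h)

theorem ofReal_add_mul_I_mem_hSemicircle {c r : ℝ} (hr : 0 < r) :
    (c + r * I : ℂ) ∈ hSemicircle c r := by
  refine ⟨by simpa using hr, ?_⟩
  rw [add_sub_cancel_left, norm_mul, norm_I, mul_one, norm_real, Real.norm_of_nonneg hr.le]

/-- The top points `c + r i` and `c' + r' i` lying on both semicircles force `c = c'`. -/
theorem eq_of_hSemicircle_eq {c c' r r' : ℝ} (hr : 0 < r) (hr' : 0 < r')
    (h : hSemicircle c r = hSemicircle c' r') : c = c' := by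
  have h₁ := (h ▸ ofReal_add_mul_I_mem_hSemicircle (c := c) hr).2
  have h₂ := (h ▸ ofReal_add_mul_I_mem_hSemicircle (c := c') hr').2
  have e₁ := congrArg (· ^ 2) h₁
  have e₂ := congrArg (· ^ 2) h₂
  simp only [norm_sub_ofReal_sq, add_re, add_im, ofReal_re, ofReal_im, mul_re, mul_im, I_re, I_im]
    at e₁ e₂
  nlinarith [sq_nonneg (c - c')]

theorem hSemicircle_inter_vertical_eq_empty {c r a : ℝ} (h : r < |a - c|) :
    hSemicircle c r ∩ {z : ℂ | 0 < z.im ∧ z.re = a} = ∅ := by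
  refine eq_empty_of_forall_notMem fun z ⟨⟨_, hzc⟩, _, hza⟩ => h.not_ge ?_
  calc |a - c| = |(z - c).re| := by simp [hza]
    _ ≤ r := hzc ▸ abs_re_le_norm _

theorem hSemicircle_through_inter_hSemicircle_eq_empty {p : ℂ} {c c₀ r₀ : ℝ}
    (h : 2 * |c - c₀| < |‖p - c₀‖ - r₀|) :
    hSemicircle c ‖p - c‖ ∩ hSemicircle c₀ r₀ = ∅ := by
  have shift : ∀ w : ℂ, |‖w - c₀‖ - ‖w - c‖| ≤ |c - c₀| := fun w => by
    simpa [← ofReal_sub, norm_real] using abs_norm_sub_norm_le (w - c₀) (w - c)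
  refine eq_empty_of_forall_notMem fun z ⟨⟨_, hzc⟩, _, hzc₀⟩ => h.not_ge ?_
  have hz := shift z
  rw [hzc, hzc₀] at hz
  calc |‖p - c₀‖ - r₀| ≤ |‖p - c₀‖ - ‖p - c‖| + |‖p - c‖ - r₀| := abs_sub_le _ _ _
    _ ≤ 2 * |c - c₀| := by rw [abs_sub_comm] at hz; linarith [shift p]

theorem infinite_setOf_norm_sub_lt_abs_sub {p : ℂ} {a : ℝ} (h : p.re ≠ a) :
    {c : ℝ | ‖p - c‖ < |a - c|}.Infinite := by
  have hd : a - p.re ≠ 0 := sub_ne_zero.2 h.symm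
  -- `|a - c| ^ 2 - ‖p - c‖ ^ 2 = (a - p.re) (a + p.re - 2 c) - p.im ^ 2`, and the centre
  -- `center y` makes the product equal to `y`.
  set center : ℝ → ℝ := fun y => (a + p.re - y / (a - p.re)) / 2
  have hinj : Function.Injective center := fun y y' hyy' => by
    simpa [center, hd] using hyy'
  refine ((Ioi_infinite (p.im ^ 2)).image hinj.injOn).mono ?_
  rintro _ ⟨y, hy, rfl⟩
  have key : ‖p - center y‖ ^ 2 < |a - center y| ^ 2 := by
    rw [norm_sub_ofReal_sq, sq_abs]
    have : (a - center y) ^ 2 - (p.re - center y) ^ 2 = y := by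
      simp only [center]; field_simp; ring
    linarith [mem_Ioi.1 hy]
  exact lt_of_pow_lt_pow_left₀ 2 (abs_nonneg _) key

theorem infinite_setOf_hLine_mem_inter_eq_empty {p : ℂ} (hp : 0 < p.im) {L : Set ℂ}
    {S : Set ℝ} (hS : S.Infinite) (hdisj : ∀ c ∈ S, hSemicircle c ‖p - c‖ ∩ L = ∅) :
    {M : Set ℂ | IsHLine M ∧ p ∈ M ∧ M ∩ L = ∅}.Infinite := by
  have hinj : InjOn (fun c : ℝ => hSemicircle c ‖p - c‖) S := fun c _ c' _ h =>
    eq_of_hSemicircle_eq (norm_sub_ofReal_pos hp c) (norm_sub_ofReal_pos hp c') h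
  refine (hS.image hinj).mono ?_
  rintro _ ⟨c, hc, rfl⟩
  exact ⟨isHLine_hSemicircle (norm_sub_ofReal_pos hp c), ⟨hp, rfl⟩, hdisj c hc⟩

end HLine

open HLine

/-- The parallel postulate fails in the upper half-plane: through any point of
the upper half-plane not on a given h-line there pass infinitely many h-lines
disjoint from the given one. -/
theorem parallel_postulate_fails_in_upper_half_plane
    (L : Set ℂ) (hL : IsHLine L) (p : ℂ) (hp : 0 < p.im) (hpL : p ∉ L) :
    {M : Set ℂ | IsHLine M ∧ p ∈ M ∧ M ∩ L = ∅}.Infinite := by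
  rcases hL with ⟨a, rfl⟩ | ⟨c₀, r₀, -, rfl⟩
  · have hpa : p.re ≠ a := fun h => hpL ⟨hp, h⟩
    exact infinite_setOf_hLine_mem_inter_eq_empty hp (infinite_setOf_norm_sub_lt_abs_sub hpa)
      fun c hc => hSemicircle_inter_vertical_eq_empty hc
  · have hgap : 0 < |‖p - c₀‖ - r₀| := abs_pos.2 (sub_ne_zero.2 fun h => hpL ⟨hp, h⟩)
    refine infinite_setOf_hLine_mem_inter_eq_empty hp
      (infinite_of_mem_nhds c₀ (Metric.ball_mem_nhds c₀ (half_pos hgap))) fun c hc => ?_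
    rw [Metric.mem_ball, Real.dist_eq] at hc
    exact hSemicircle_through_inter_hSemicircle_eq_empty (by linarith)
end

section
/- The sum of the angles of a spherical triangle always exceeds π (and is less than 3π): let A, B, C be linearly independent unit vectors in ℝ³, and let α be the angle between the vectors B − ⟨B,A⟩A and C − ⟨C,A⟩A (the tangent directions at A of the great-circle arcs from A to B and from A to C), with β and γ defined analogously at B and at C. Then π < α + β + γ < 3π. -/
/-!
The map `x ↦ A × x` is an isometry of `A^⊥` carrying the tangent directions `B - ⟨B, A⟩ A` and
`C - ⟨C, A⟩ A` at `A` to `A × B` and `A × C = -(C × A)`, so the angle at `A` is `π` minus the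
angle between the polar vertices `A × B` and `C × A`. Hence `α + β + γ = 3π - s`, where `s` is the
perimeter of the polar triangle `B × C, C × A, A × B`, whose vertices are again linearly
independent. For linearly independent `u, v, w` the strict triangle inequality for angles gives
`0 < s`, and applied to `u, -v, w` it gives `s < 2π`.
-/

open InnerProductGeometry Real
open scoped RealInnerProductSpace

theorem LinearIndependent.triple_iff {R M : Type*} [Ring R] [AddCommGroup M] [Module R M]
    {x y z : M} :
    LinearIndependent R ![x, y, z] ↔
      ∀ a b c : R, a • x + b • y + c • z = 0 → a = 0 ∧ b = 0 ∧ c = 0 := by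
  rw [Fintype.linearIndependent_iff]
  constructor
  · intro h a b c habc
    have := h ![a, b, c] (by simpa [Fin.sum_univ_three] using habc)
    exact ⟨this 0, this 1, this 2⟩
  · intro h g hg i
    obtain ⟨h0, h1, h2⟩ := h (g 0) (g 1) (g 2) (by simpa [Fin.sum_univ_three] using hg)
    fin_cases i <;> assumption

section

variable {V : Type*} [NormedAddCommGroup V] [InnerProductSpace ℝ V]

theorem angle_lt_angle_add_angle_of_linearIndependent {x y z : V}
    (h : LinearIndependent ℝ ![x, y, z]) : angle x z < angle x y + angle y z := by
  have hind := LinearIndependent.triple_iff.1 h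
  have hy : y ≠ 0 := fun hy => one_ne_zero (hind 0 1 0 (by simp [hy])).2.1
  refine (angle_le_angle_add_angle x y z).lt_of_ne fun heq => ?_
  rcases (angle_eq_angle_add_angle_iff hy).1 heq with hπ | hspan
  · obtain ⟨-, r, -, rfl⟩ := angle_eq_pi_iff.1 hπ
    exact one_ne_zero (hind (-r) 0 1 (by module)).2.2
  · obtain ⟨a, c, hac⟩ := Submodule.mem_span_pair.1 hspan
    exact one_ne_zero (neg_eq_zero.1
      (hind a (-1) c (by rw [← hac, NNReal.smul_def, NNReal.smul_def]; module)).2.1)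

theorem angle_add_angle_add_angle_lt_two_pi {u v w : V}
    (h : LinearIndependent ℝ ![u, v, w]) : angle u v + angle v w + angle w u < 2 * π := by
  have h' : LinearIndependent ℝ ![u, -v, w] := by
    refine LinearIndependent.triple_iff.2 fun a b c habc => ?_
    obtain ⟨ha, hb, hc⟩ := LinearIndependent.triple_iff.1 h a (-b) c (by rw [← habc]; module)
    exact ⟨ha, neg_eq_zero.1 hb, hc⟩
  have htri := angle_lt_angle_add_angle_of_linearIndependent h'
  rw [angle_neg_right, angle_neg_left, angle_comm u w] at htri
  linarith

theorem angle_eq_angle_of_inner_eq {W : Type*} [NormedAddCommGroup W] [InnerProductSpace ℝ W]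
    {x y : V} {x' y' : W} (hxy : ⟪x, y⟫ = ⟪x', y'⟫) (hx : ⟪x, x⟫ = ⟪x', x'⟫)
    (hy : ⟪y, y⟫ = ⟪y', y'⟫) : angle x y = angle x' y' := by
  simp only [angle, norm_eq_sqrt_real_inner (F := V), norm_eq_sqrt_real_inner (F := W), hxy, hx, hy]

end

namespace EuclideanSpace

open WithLp Matrix

def cross (a b : EuclideanSpace ℝ (Fin 3)) : EuclideanSpace ℝ (Fin 3) :=
  toLp 2 (ofLp a ⨯₃ ofLp b)

variable (a b c d : EuclideanSpace ℝ (Fin 3))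

theorem cross_anticomm : cross b a = -cross a b := by
  rw [cross, cross, ← _root_.cross_anticomm, toLp_neg]

theorem inner_cross_cross : ⟪cross a b, cross c d⟫ = ⟪a, c⟫ * ⟪b, d⟫ - ⟪a, d⟫ * ⟪b, c⟫ := by
  simp only [cross, inner_eq_star_dotProduct, star_trivial, cross_dot_cross]
  ring

theorem inner_cross_left : ⟪cross a b, a⟫ = 0 := by
  simp [cross, inner_eq_star_dotProduct, dot_self_cross]

theorem inner_cross_right : ⟪cross a b, b⟫ = 0 := by
  simp [cross, inner_eq_star_dotProduct, dot_cross_self]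

theorem inner_cross_cyclic : ⟪cross a b, c⟫ = ⟪cross b c, a⟫ :=
  triple_product_permutation _ _ _

theorem inner_cross_ne_zero_of_linearIndependent (h : LinearIndependent ℝ ![a, b, c]) :
    ⟪cross b c, a⟫ ≠ 0 := by
  have h' := h.map' (WithLp.linearEquiv 2 ℝ (Fin 3 → ℝ)).toLinearMap (LinearEquiv.ker _)
  have hrows : ⇑(WithLp.linearEquiv 2 ℝ (Fin 3 → ℝ)).toLinearMap ∘ ![a, b, c] =
      ![ofLp a, ofLp b, ofLp c] := by
    ext i : 1
    fin_cases i <;> rfl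
  rw [hrows] at h'
  change ofLp a ⬝ᵥ ofLp b ⨯₃ ofLp c ≠ 0
  rw [triple_product_eq_det]
  exact ((isUnit_iff_isUnit_det _).1 (linearIndependent_rows_iff_isUnit.1 h')).ne_zero

theorem linearIndependent_cross (h : LinearIndependent ℝ ![a, b, c]) :
    LinearIndependent ℝ ![cross b c, cross c a, cross a b] := by
  have hD := inner_cross_ne_zero_of_linearIndependent a b c h
  refine LinearIndependent.triple_iff.2 fun x y z hxyz => ?_
  have ha := congrArg (⟪·, a⟫) hxyz
  have hb := congrArg (⟪·, b⟫) hxyz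
  have hc := congrArg (⟪·, c⟫) hxyz
  simp only [inner_add_left, real_inner_smul_left, inner_zero_left, inner_cross_left,
    inner_cross_right, inner_cross_cyclic c a b, inner_cross_cyclic a b c, mul_zero, add_zero,
    zero_add] at ha hb hc
  exact ⟨(mul_eq_zero.1 ha).resolve_right hD, (mul_eq_zero.1 hb).resolve_right hD,
    (mul_eq_zero.1 hc).resolve_right hD⟩

theorem angle_sub_inner_smul_eq_pi_sub_angle_cross (ha : ‖a‖ = 1) :
    angle (b - ⟪b, a⟫ • a) (c - ⟪c, a⟫ • a) = π - angle (cross a b) (cross c a) := by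
  have haa : ⟪a, a⟫ = 1 := inner_self_eq_one_of_norm_eq_one ha
  have hinner (x y : EuclideanSpace ℝ (Fin 3)) :
      ⟪x - ⟪x, a⟫ • a, y - ⟪y, a⟫ • a⟫ = ⟪cross a x, cross a y⟫ := by
    simp only [inner_cross_cross, inner_sub_left, inner_sub_right, real_inner_smul_left,
      real_inner_smul_right, haa, real_inner_comm a]
    ring
  rw [angle_eq_angle_of_inner_eq (hinner b c) (hinner b b) (hinner c c), cross_anticomm c a,
    angle_neg_right]

end EuclideanSpace

open EuclideanSpace

/-- The sum of the angles of a spherical triangle with vertices `A, B, C`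
(linearly independent unit vectors in `ℝ³`) always exceeds `π` and is less
than `3π`, where the angle at a vertex is the angle between the tangent
directions of the two great-circle arcs emanating from it. -/
theorem spherical_triangle_angle_sum_gt_pi_lt_three_pi
    (A B C : EuclideanSpace ℝ (Fin 3))
    (hA : ‖A‖ = 1) (hB : ‖B‖ = 1) (hC : ‖C‖ = 1)
    (hind : LinearIndependent ℝ ![A, B, C]) :
    Real.pi <
        angle (B - (inner ℝ B A : ℝ) • A) (C - (inner ℝ C A : ℝ) • A)
      + angle (C - (inner ℝ C B : ℝ) • B) (A - (inner ℝ A B : ℝ) • B)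
      + angle (A - (inner ℝ A C : ℝ) • C) (B - (inner ℝ B C : ℝ) • C) ∧
    angle (B - (inner ℝ B A : ℝ) • A) (C - (inner ℝ C A : ℝ) • A)
      + angle (C - (inner ℝ C B : ℝ) • B) (A - (inner ℝ A B : ℝ) • B)
      + angle (A - (inner ℝ A C : ℝ) • C) (B - (inner ℝ B C : ℝ) • C)
      < 3 * Real.pi := by
  have hpolar := linearIndependent_cross A B C hind
  have hsum := angle_add_angle_add_angle_lt_two_pi hpolar
  have htri := angle_lt_angle_add_angle_of_linearIndependent hpolar
  rw [angle_sub_inner_smul_eq_pi_sub_angle_cross A B C hA,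
    angle_sub_inner_smul_eq_pi_sub_angle_cross B C A hB,
    angle_sub_inner_smul_eq_pi_sub_angle_cross C A B hC,
    angle_comm (cross A B) (cross C A), angle_comm (cross C A) (cross B C)]
  constructor <;>
    linarith [angle_comm (cross A B) (cross B C), angle_nonneg (cross B C) (cross A B)]
end
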